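/- arXiv:1902.03035 — 4 statements merged into one kernel-verified Lean document; each statement's English description precedes it below -/
import Mathlib

section
/- Let W be a symmetric positive definite d×d matrix with unit trace and eigendecomposition W = Σ_i λ_i u_i u_i^T. Consider the sparse sampling scheme: draw I, J independently with P(I=i)=P(J=i)=λ_i; if I=J set w = u_I; if I≠J draw a uniform sign s ∈ {-1,1} and set w = (u_I + s u_J)/√2. Then E[w w^T] = W. -/
open Matrix Finset

/-! Averaging over the sign `s` kills the cross terms: by the parallelogram law for outer
products, `E_s[w wᵀ] = (u_I u_Iᵀ + u_J u_Jᵀ)/2`, which for `I = J` is just `u_I u_Iᵀ`.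
Since `I` and `J` are independent with the same law and `∑ λ_i = 1`, the expectation of
`(f(I) + f(J))/2` is `E[f(I)] = ∑ λ_i u_i u_iᵀ = W`. -/

theorem vecMulVec_add_self_add_vecMulVec_sub_self {m R : Type*} [CommRing R] (x y : m → R) :
    vecMulVec (x + y) (x + y) + vecMulVec (x - y) (x - y) =
      2 • (vecMulVec x x + vecMulVec y y) := by
  simp only [vecMulVec_add, add_vecMulVec, vecMulVec_sub, sub_vecMulVec]
  abel

theorem sum_sum_mul_smul_add {ι R M : Type*} [Fintype ι] [CommSemiring R] [AddCommMonoid M]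
    [Module R M] (l : ι → R) (A : ι → M) :
    ∑ i, ∑ j, (l i * l j) • (A i + A j) = 2 • ((∑ i, l i) • ∑ i, l i • A i) := by
  have hfirst : ∑ i, ∑ j, (l i * l j) • A i = (∑ i, l i) • ∑ i, l i • A i := by
    simp only [← sum_smul, ← mul_sum]
    rw [smul_sum]
    simp only [mul_comm (l _), mul_smul]
  have hsecond : ∑ i, ∑ j, (l i * l j) • A j = ∑ i, ∑ j, (l i * l j) • A i := by
    rw [sum_comm]
    simp only [mul_comm]
  simp only [smul_add, sum_add_distrib, hsecond, hfirst, two_nsmul]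

theorem stmt_3_general (d : ℕ) (l : Fin d → ℝ) (u : Fin d → Fin d → ℝ)
    (W : Matrix (Fin d) (Fin d) ℝ)
    (hsum : ∑ i, l i = 1)
    (hW : W = ∑ i, l i • Matrix.vecMulVec (u i) (u i)) :
    ∑ i, ∑ j, (l i * l j) •
      (if i = j then Matrix.vecMulVec (u i) (u i)
       else (2 : ℝ)⁻¹ •
          ((2 : ℝ)⁻¹ • Matrix.vecMulVec (u i + u j) (u i + u j)) +
            (2 : ℝ)⁻¹ •
          ((2 : ℝ)⁻¹ • Matrix.vecMulVec (u i - u j) (u i - u j))) = W := by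
  have hsign : ∀ i j, (if i = j then vecMulVec (u i) (u i)
       else (2 : ℝ)⁻¹ • ((2 : ℝ)⁻¹ • vecMulVec (u i + u j) (u i + u j)) +
            (2 : ℝ)⁻¹ • ((2 : ℝ)⁻¹ • vecMulVec (u i - u j) (u i - u j))) =
      (2 : ℝ)⁻¹ • (vecMulVec (u i) (u i) + vecMulVec (u j) (u j)) := by
    intro i j
    split_ifs with h
    · subst h
      rw [← two_smul ℝ, smul_smul, inv_mul_cancel₀ two_ne_zero, one_smul]
    · rw [← smul_add, ← smul_add, vecMulVec_add_self_add_vecMulVec_sub_self, smul_smul,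
        two_nsmul, ← two_smul ℝ, smul_smul]
      norm_num
  simp only [hsign]
  simp only [smul_comm _ (2 : ℝ)⁻¹, ← smul_sum, sum_sum_mul_smul_add, hsum, one_smul, ← hW]
  rw [two_nsmul, ← two_smul ℝ, smul_smul, inv_mul_cancel₀ two_ne_zero, one_smul]

/-- Sparse sampling: draw `I, J` i.i.d. with `P(I=i) = λ i`; if `I = J` play
`w = u I`, otherwise play `w = (u I + s u J)/√2` with a uniform sign `s`. Then
`E[w wᵀ] = W`, the expectation written out as an explicit finite sum. -/
theorem stmt_3 (d : ℕ) (l : Fin d → ℝ) (u : Fin d → Fin d → ℝ)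
    (W : Matrix (Fin d) (Fin d) ℝ)
    (hortho : ∀ i j, dotProduct (u i) (u j) = if i = j then (1 : ℝ) else 0)
    (hl : ∀ i, 0 < l i) (hsum : ∑ i, l i = 1)
    (hW : W = ∑ i, l i • Matrix.vecMulVec (u i) (u i)) :
    ∑ i, ∑ j, (l i * l j) •
      (if i = j then Matrix.vecMulVec (u i) (u i)
       else (2 : ℝ)⁻¹ •
          ((2 : ℝ)⁻¹ • Matrix.vecMulVec (u i + u j) (u i + u j)) +
            (2 : ℝ)⁻¹ •
          ((2 : ℝ)⁻¹ • Matrix.vecMulVec (u i - u j) (u i - u j))) = W :=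
  stmt_3_general d l u W hsum hW
end

section
/- Let W be symmetric positive definite with unit trace and eigendecomposition W = Σ_i λ_i u_i u_i^T, and let L be any symmetric d×d matrix. Under the sparse sampling scheme (I,J ~ λ independently; if I=J, w=u_I and L̃ = (ℓ/λ_I²) u_I u_I^T with ℓ = tr(w w^T L); if I≠J, with uniform sign s, w=(u_I+s u_J)/√2 and L̃ = (s ℓ/(2 λ_I λ_J))(u_I u_J^T + u_J u_I^T)), the loss estimate is unbiased: E[L̃] = L. -/
open Matrix Finset

/-- The loss estimate of the sparse sampling scheme: when `I = J = i`, it is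
`(ℓ/λ_i²) u_i u_iᵀ` with `ℓ = tr(u_i u_iᵀ L)`; when `I = i ≠ j = J` and the sign
is `s`, it is `(s ℓ/(2 λ_i λ_j))(u_i u_jᵀ + u_j u_iᵀ)` with
`ℓ = tr(w wᵀ L)`, `w = (u_i + s u_j)/√2`. -/
noncomputable def sparseEst (d : ℕ) (l : Fin d → ℝ) (u : Fin d → Fin d → ℝ)
    (L : Matrix (Fin d) (Fin d) ℝ) (i j : Fin d) (s : ℝ) :
    Matrix (Fin d) (Fin d) ℝ :=
  if i = j then
    (Matrix.trace (Matrix.vecMulVec (u i) (u i) * L) / (l i) ^ 2) •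
      Matrix.vecMulVec (u i) (u i)
  else
    (s * Matrix.trace
        (Matrix.vecMulVec ((Real.sqrt 2)⁻¹ • (u i + s • u j))
          ((Real.sqrt 2)⁻¹ • (u i + s • u j)) * L) / (2 * l i * l j)) •
      (Matrix.vecMulVec (u i) (u j) + Matrix.vecMulVec (u j) (u i))

/-!
Write `a = U L Uᵀ` for the coordinates of `L` in the eigenbasis (the rows `u_i` of `U`). For
`I ≠ J` the estimate is `s ℓ/(2λ_Iλ_J)` times `u_I u_Jᵀ + u_J u_Iᵀ`, and
`s ℓ = (s a_II + (a_IJ + a_JI) + s a_JJ)/2`, so averaging over the sign keeps only the cross term;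
the sampling probability `λ_Iλ_J` cancels the importance weight. Hence each pair `(I, J)`,
diagonal ones included, contributes `(a_IJ/2)(u_I u_Jᵀ + u_J u_Iᵀ)`, and summing over all pairs
gives `Uᵀ a U = L`, since `a` is symmetric and `U` is orthogonal.
-/

namespace Matrix

variable {m n R : Type*}

theorem trace_vecMulVec_mul [Fintype n] [CommSemiring R] (x y : n → R) (L : Matrix n n R) :
    trace (vecMulVec x y * L) = y ⬝ᵥ L *ᵥ x := by
  rw [vecMulVec_mul, trace_vecMulVec, dotProduct_comm, dotProduct_mulVec]

theorem sum_sum_smul_vecMulVec [Fintype m] [CommSemiring R] (C : Matrix m m R)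
    (A B : Matrix m n R) :
    ∑ i, ∑ j, C i j • vecMulVec (A i) (B j) = Aᵀ * C * B := by
  ext a b
  simp only [sum_apply, smul_apply, vecMulVec_apply, smul_eq_mul, mul_apply, transpose_apply,
    Finset.sum_mul]
  rw [Finset.sum_comm]
  exact Finset.sum_congr rfl fun j _ => Finset.sum_congr rfl fun i _ => by ring

theorem sum_sum_smul_vecMulVec_add_swap [Fintype m] [CommSemiring R] (C : Matrix m m R)
    (A : Matrix m n R) :
    ∑ i, ∑ j, C i j • (vecMulVec (A i) (A j) + vecMulVec (A j) (A i)) =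
      Aᵀ * (C + Cᵀ) * A := by
  simp only [smul_add, Finset.sum_add_distrib]
  rw [Finset.sum_comm (f := fun i j => C i j • vecMulVec (A j) (A i))]
  rw [Matrix.mul_add, Matrix.add_mul, sum_sum_smul_vecMulVec]
  exact congrArg _ (sum_sum_smul_vecMulVec Cᵀ A A)

theorem transpose_mul_mul_mul_self_of_mul_transpose_eq_one [Fintype n] [DecidableEq n]
    [CommRing R] {U : Matrix n n R} (hU : U * Uᵀ = 1) (L : Matrix n n R) :
    Uᵀ * (U * L * Uᵀ) * U = L := by
  have hU' : Uᵀ * U = 1 := mul_eq_one_comm.mp hU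
  simp only [Matrix.mul_assoc, hU', Matrix.mul_one, ← Matrix.mul_assoc Uᵀ U, Matrix.one_mul]

end Matrix

open Matrix

section SparseEst

variable {d : ℕ} (l : Fin d → ℝ) (u L : Matrix (Fin d) (Fin d) ℝ)

theorem sparseEst_self (i : Fin d) (s : ℝ) :
    sparseEst d l u L i i s = ((u * L * uᵀ) i i / l i ^ 2) • vecMulVec (u i) (u i) := by
  unfold sparseEst
  rw [if_pos rfl, trace_vecMulVec_mul, mul_mul_apply, transpose_transpose]

theorem sparseEst_of_ne {i j : Fin d} (hij : i ≠ j) (s : ℝ) :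
    sparseEst d l u L i j s =
      (s * ((u * L * uᵀ) i i + s * ((u * L * uᵀ) i j + (u * L * uᵀ) j i)
          + s ^ 2 * (u * L * uᵀ) j j) / (4 * l i * l j)) •
        (vecMulVec (u i) (u j) + vecMulVec (u j) (u i)) := by
  simp only [mul_mul_apply, transpose_transpose]
  unfold sparseEst
  rw [if_neg hij, trace_vecMulVec_mul]
  congr 1
  simp only [mulVec_smul, mulVec_add, smul_dotProduct, dotProduct_smul, dotProduct_add,
    add_dotProduct, smul_eq_mul]
  field_simp
  rw [Real.sq_sqrt zero_le_two]
  ring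

theorem sparseEst_sign_average {i j : Fin d} (hi : l i ≠ 0) (hj : l j ≠ 0) :
    (l i * l j) •
        ((2 : ℝ)⁻¹ • sparseEst d l u L i j 1 + (2 : ℝ)⁻¹ • sparseEst d l u L i j (-1)) =
      (4⁻¹ * ((u * L * uᵀ) i j + (u * L * uᵀ) j i)) •
        (vecMulVec (u i) (u j) + vecMulVec (u j) (u i)) := by
  rcases eq_or_ne i j with rfl | hij
  · simp only [sparseEst_self, ← two_smul ℝ (vecMulVec (u i) (u i)), smul_smul, ← add_smul]
    congr 1
    field_simp
    ring
  · simp only [sparseEst_of_ne _ _ _ hij, smul_smul, ← add_smul]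
    congr 1
    field_simp
    ring

end SparseEst

theorem stmt_4_general (d : ℕ) (l : Fin d → ℝ) (u : Fin d → Fin d → ℝ)
    (L : Matrix (Fin d) (Fin d) ℝ)
    (hortho : ∀ i j, dotProduct (u i) (u j) = if i = j then (1 : ℝ) else 0)
    (hl : ∀ i, 0 < l i)
    (hL : L.IsSymm) :
    ∑ i, ∑ j, (l i * l j) •
      ((2 : ℝ)⁻¹ • sparseEst d l u L i j 1 + (2 : ℝ)⁻¹ • sparseEst d l u L i j (-1))
      = L := by
  set U : Matrix (Fin d) (Fin d) ℝ := u
  have hU : U * Uᵀ = 1 := by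
    ext i j
    rw [one_apply]
    exact hortho i j
  have hM : (U * L * Uᵀ)ᵀ = U * L * Uᵀ := by
    rw [transpose_mul, transpose_mul, transpose_transpose, hL.eq, Matrix.mul_assoc]
  calc _ = ∑ i, ∑ j, ((2 : ℝ)⁻¹ • (U * L * Uᵀ)) i j •
        (vecMulVec (U i) (U j) + vecMulVec (U j) (U i)) := by
        refine Finset.sum_congr rfl fun i _ => Finset.sum_congr rfl fun j _ => ?_
        rw [sparseEst_sign_average l U L (hl i).ne' (hl j).ne',
          ← transpose_apply (U * L * Uᵀ) i j, hM, Matrix.smul_apply, smul_eq_mul]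
        ring_nf
    _ = L := by
      rw [sum_sum_smul_vecMulVec_add_swap, transpose_smul, hM, ← add_smul, ← two_mul,
        mul_inv_cancel₀ two_ne_zero, one_smul]
      exact transpose_mul_mul_mul_self_of_mul_transpose_eq_one hU L

/-- The sparse-sampling loss estimate is unbiased: `E[L̃] = L`. -/
theorem stmt_4 (d : ℕ) (l : Fin d → ℝ) (u : Fin d → Fin d → ℝ)
    (L : Matrix (Fin d) (Fin d) ℝ)
    (hortho : ∀ i j, dotProduct (u i) (u j) = if i = j then (1 : ℝ) else 0)
    (hl : ∀ i, 0 < l i) (hsum : ∑ i, l i = 1)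
    (hL : L.IsSymm) :
    ∑ i, ∑ j, (l i * l j) •
      ((2 : ℝ)⁻¹ • sparseEst d l u L i j 1 + (2 : ℝ)⁻¹ • sparseEst d l u L i j (-1))
      = L :=
  stmt_4_general d l u L hortho hl hL
end

section
/- Let W be symmetric positive definite with unit trace and eigenvectors u_i, eigenvalues λ_i > 0. With off-diagonal sampling w = Σ_i s_i √λ_i u_i (s_i i.i.d. uniform ±1) and estimate L̃ = ℓ (W^{-1} w w^T W^{-1} − W^{-1}) where ℓ = tr(w w^T L) for a symmetric matrix L, we have E[L̃] = 2(L − Σ_i (u_i^T L u_i) u_i u_i^T). -/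
open Matrix Finset

/-!
Conjugating by the orthogonal matrix `U` whose rows are the `u i` turns everything diagonal:
`w = Uᵀ (s * c)` and `W⁻¹ w = Uᵀ (s / c)` with `c = √l`, while `ℓ = tr ((s * c) (s * c)ᵀ L')`
for `L' = U L Uᵀ`. As `s i ^ 2 = 1`, the diagonal of `(s / c) (s / c)ᵀ - diag (c ^ 2)⁻¹`
vanishes identically. Off the diagonal, entry `(p, q)` only involves the moments
`E[s i s j s p s q] = [i = p ∧ j = q] + [i = q ∧ j = p]`: when some coordinate occurs only
once, flipping its sign negates the summand. Hence in the eigenbasis the expectation is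
`L' + L'ᵀ - 2 diag L'`.
-/

noncomputable abbrev signVectors (ι : Type*) [Fintype ι] [DecidableEq ι] : Finset (ι → ℝ) :=
  Fintype.piFinset fun _ => {-1, 1}

section Rademacher

variable {ι : Type*} [Fintype ι] [DecidableEq ι]

lemma card_signVectors : #(signVectors ι) = 2 ^ Fintype.card ι := by
  simp [Finset.card_pair (by norm_num : (-1 : ℝ) ≠ 1)]

lemma mem_signVectors {s : ι → ℝ} : s ∈ signVectors ι ↔ ∀ i, s i = -1 ∨ s i = 1 := by
  simp

lemma mul_self_eq_one_of_mem_signVectors {s : ι → ℝ} (hs : s ∈ signVectors ι) (i : ι) :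
    s i * s i = 1 := by
  rcases mem_signVectors.1 hs i with h | h <;> simp [h]

lemma sum_signVectors_mul_eq_zero (j : ι) (f : (ι → ℝ) → ℝ)
    (hf : ∀ s, f (Function.update s j (-s j)) = f s) :
    ∑ s ∈ signVectors ι, s j * f s = 0 := by
  refine Finset.sum_involution (fun s _ => Function.update s j (-s j)) (fun s _ => by simp [hf])
    (fun s hs hne => ?_) (fun s hs => ?_) (fun s _ => by simp)
  · intro h
    have hj : -s j = s j := by simpa using congrFun h j
    exact hne (by simp [neg_eq_self.1 hj])
  · rw [mem_signVectors] at hs ⊢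
    intro i
    rcases eq_or_ne i j with rfl | hij
    · rcases hs i with h | h <;> simp [h]
    · simpa [hij] using hs i

lemma sum_signVectors_mul_mul_mul_mul {p q : ι} (hpq : p ≠ q) (i j : ι) :
    ∑ s ∈ signVectors ι, s i * s j * (s p * s q) =
      (if i = p ∧ j = q then 2 ^ Fintype.card ι else 0) +
        (if i = q ∧ j = p then 2 ^ Fintype.card ι else 0) := by
  by_cases hp : i = p ∨ j = p
  · by_cases hq : i = q ∨ j = q
    · have hpair : (i = p ∧ j = q) ∨ (i = q ∧ j = p) := by grind
      have hcard : ∑ s ∈ signVectors ι, (1 : ℝ) = 2 ^ Fintype.card ι := by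
        rw [Finset.sum_const, card_signVectors]
        simp
      rw [← hcard]
      rcases hpair with ⟨rfl, rfl⟩ | ⟨rfl, rfl⟩
      all_goals
        simp only [hpq, hpq.symm, and_self, if_true, if_false, add_zero, zero_add]
        refine Finset.sum_congr rfl fun s hs => ?_
        linear_combination (s j * s j) * mul_self_eq_one_of_mem_signVectors hs i +
          mul_self_eq_one_of_mem_signVectors hs j
    · obtain ⟨hiq, hjq⟩ := not_or.1 hq
      rw [if_neg (by grind), if_neg (by grind), add_zero,
        ← sum_signVectors_mul_eq_zero q (fun s => s i * s j * s p) (by simp [hiq, hjq, hpq])]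
      exact Finset.sum_congr rfl fun s _ => by ring
  · obtain ⟨hip, hjp⟩ := not_or.1 hp
    rw [if_neg (by grind), if_neg (by grind), add_zero,
      ← sum_signVectors_mul_eq_zero p (fun s => s i * s j * s q) (by simp [hip, hjp, hpq.symm])]
    exact Finset.sum_congr rfl fun s _ => by ring

lemma sum_signVectors_quadratic_mul {p q : ι} (hpq : p ≠ q) (B : ι → ι → ℝ) :
    ∑ s ∈ signVectors ι, (∑ i, ∑ j, s i * s j * B i j) * (s p * s q) =
      2 ^ Fintype.card ι * (B p q + B q p) := by
  calc ∑ s ∈ signVectors ι, (∑ i, ∑ j, s i * s j * B i j) * (s p * s q)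
      = ∑ i, ∑ j, B i j * ∑ s ∈ signVectors ι, s i * s j * (s p * s q) := by
        simp only [Finset.sum_mul, Finset.mul_sum]
        rw [Finset.sum_comm]
        refine Finset.sum_congr rfl fun i _ => ?_
        rw [Finset.sum_comm]
        exact Finset.sum_congr rfl fun j _ => Finset.sum_congr rfl fun s _ => by ring
    _ = 2 ^ Fintype.card ι * (B p q + B q p) := by
        simp [sum_signVectors_mul_mul_mul_mul hpq, mul_add, Finset.sum_add_distrib, ite_and]
        ring

theorem sum_signVectors_trace_smul_sub (A : Matrix ι ι ℝ) {c : ι → ℝ} (hc : ∀ i, c i ≠ 0) :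
    ∑ s ∈ signVectors ι,
        trace (vecMulVec (s * c) (s * c) * A) • (vecMulVec (s / c) (s / c) - diagonal (c ^ 2)⁻¹) =
      (2 ^ Fintype.card ι : ℝ) • (A + Aᵀ - 2 • diagonal A.diag) := by
  have htrace : ∀ s : ι → ℝ, trace (vecMulVec (s * c) (s * c) * A) =
      ∑ i, ∑ j, s i * s j * (c i * c j * A j i) := fun s => by
    simp only [Matrix.trace, Matrix.diag, mul_apply, vecMulVec_apply, Pi.mul_apply]
    exact Finset.sum_congr rfl fun i _ => Finset.sum_congr rfl fun j _ => by ring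
  ext p q
  simp only [Matrix.sum_apply, Matrix.smul_apply, Matrix.sub_apply, Matrix.add_apply,
    transpose_apply, diagonal_apply, vecMulVec_apply, Pi.div_apply, Pi.inv_apply, Pi.pow_apply,
    smul_eq_mul, Matrix.diag_apply, htrace]
  rcases eq_or_ne p q with rfl | hpq
  · rw [if_pos rfl, if_pos rfl, two_nsmul, sub_self, mul_zero]
    refine Finset.sum_eq_zero fun s hs => ?_
    rw [div_mul_div_comm, mul_self_eq_one_of_mem_signVectors hs, sq, one_div, sub_self, mul_zero]
  · simp only [if_neg hpq, sub_zero, smul_zero]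
    calc ∑ s ∈ signVectors ι,
          (∑ i, ∑ j, s i * s j * (c i * c j * A j i)) * (s p / c p * (s q / c q))
        = (c p * c q)⁻¹ *
            ∑ s ∈ signVectors ι, (∑ i, ∑ j, s i * s j * (c i * c j * A j i)) * (s p * s q) := by
          rw [Finset.mul_sum]
          exact Finset.sum_congr rfl fun s _ => by field_simp
      _ = 2 ^ Fintype.card ι * (A p q + A q p) := by
          rw [sum_signVectors_quadratic_mul hpq]
          field_simp [hc p, hc q]
          ring

end Rademacher

section Orthogonal

variable {ι : Type*} [Fintype ι] [DecidableEq ι] (V : orthogonalGroup ι ℝ)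

noncomputable def orthogonalConj : Matrix ι ι ℝ ≃⋆ₐ[ℝ] Matrix ι ι ℝ :=
  Unitary.conjStarAlgAut ℝ (Matrix ι ι ℝ) (star V)

lemma orthogonalConj_apply (X : Matrix ι ι ℝ) :
    orthogonalConj V X = (V : Matrix ι ι ℝ)ᵀ * X * V := by
  simp [orthogonalConj, star_eq_conjTranspose]

lemma orthogonalConj_symm_apply (X : Matrix ι ι ℝ) :
    (orthogonalConj V).symm X = (V : Matrix ι ι ℝ) * X * (V : Matrix ι ι ℝ)ᵀ := by
  simp [orthogonalConj, star_eq_conjTranspose]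

lemma vecMulVec_vecMul_eq_orthogonalConj (x y : ι → ℝ) :
    vecMulVec (x ᵥ* V) (y ᵥ* V) = orthogonalConj V (vecMulVec x y) := by
  rw [orthogonalConj_apply, Matrix.mul_assoc, vecMulVec_mul, mul_vecMulVec, mulVec_transpose]

lemma sum_smul_vecMulVec_eq_orthogonalConj (f : ι → ℝ) :
    ∑ i, f i • vecMulVec ((V : Matrix ι ι ℝ) i) ((V : Matrix ι ι ℝ) i) =
      orthogonalConj V (diagonal f) := by
  rw [orthogonalConj_apply]
  ext p q
  simp only [Matrix.sum_apply, Matrix.smul_apply, vecMulVec_apply, mul_apply, transpose_apply,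
    diagonal_apply, mul_ite, mul_zero, Finset.sum_ite_eq', Finset.mem_univ, if_true, smul_eq_mul]
  exact Finset.sum_congr rfl fun i _ => by ring

lemma trace_orthogonalConj (X : Matrix ι ι ℝ) : trace (orthogonalConj V X) = trace X := by
  rw [orthogonalConj_apply, trace_mul_cycle, (mem_orthogonalGroup_iff ι ℝ).1 V.2, Matrix.one_mul]

lemma trace_orthogonalConj_mul (X Y : Matrix ι ι ℝ) :
    trace (orthogonalConj V X * Y) = trace (X * (orthogonalConj V).symm Y) := by
  rw [← trace_orthogonalConj V (X * _), map_mul, StarAlgEquiv.apply_symm_apply]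

lemma inv_orthogonalConj_diagonal {f : ι → ℝ} (hf : ∀ i, f i ≠ 0) :
    (orthogonalConj V (diagonal f))⁻¹ = orthogonalConj V (diagonal f⁻¹) := by
  refine inv_eq_left_inv ?_
  rw [← map_mul, diagonal_mul_diagonal, ← map_one (orthogonalConj V), ← diagonal_one]
  congr 2
  ext i
  simp [hf i]

lemma transpose_orthogonalConj_symm (X : Matrix ι ι ℝ) :
    ((orthogonalConj V).symm X)ᵀ = (orthogonalConj V).symm Xᵀ := by
  rw [orthogonalConj_symm_apply, orthogonalConj_symm_apply, transpose_mul, transpose_mul,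
    transpose_transpose, Matrix.mul_assoc]

lemma sum_dotProduct_mulVec_smul_vecMulVec_eq_orthogonalConj (X : Matrix ι ι ℝ) :
    ∑ i, ((V : Matrix ι ι ℝ) i ⬝ᵥ X *ᵥ (V : Matrix ι ι ℝ) i) •
        vecMulVec ((V : Matrix ι ι ℝ) i) ((V : Matrix ι ι ℝ) i) =
      orthogonalConj V (diagonal ((orthogonalConj V).symm X).diag) := by
  rw [← sum_smul_vecMulVec_eq_orthogonalConj, orthogonalConj_symm_apply]
  simp only [diag_apply, mul_mul_apply, transpose_transpose]

lemma diagonal_mul_vecMulVec_mul_diagonal (a b x y : ι → ℝ) :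
    diagonal a * vecMulVec x y * diagonal b = vecMulVec (a * x) (y * b) := by
  ext i j
  simp [vecMulVec_apply, mul_assoc]

lemma trace_smul_sub_eq_orthogonalConj {c : ι → ℝ} (hc : ∀ i, c i ≠ 0) (L : Matrix ι ι ℝ)
    (s : ι → ℝ) :
    trace (vecMulVec ((s * c) ᵥ* V) ((s * c) ᵥ* V) * L) •
        ((orthogonalConj V (diagonal (c ^ 2)))⁻¹ * vecMulVec ((s * c) ᵥ* V) ((s * c) ᵥ* V) *
          (orthogonalConj V (diagonal (c ^ 2)))⁻¹ - (orthogonalConj V (diagonal (c ^ 2)))⁻¹) =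
      orthogonalConj V (trace (vecMulVec (s * c) (s * c) * (orthogonalConj V).symm L) •
        (vecMulVec (s / c) (s / c) - diagonal (c ^ 2)⁻¹)) := by
  rw [vecMulVec_vecMul_eq_orthogonalConj, trace_orthogonalConj_mul,
    inv_orthogonalConj_diagonal V (f := c ^ 2) fun i => pow_ne_zero 2 (hc i), ← map_mul,
    ← map_mul, ← map_sub, ← map_smul, diagonal_mul_vecMulVec_mul_diagonal]
  congr 4 <;> funext i <;> simp <;> field_simp

end Orthogonal

theorem stmt_6_general (d : ℕ) (l : Fin d → ℝ) (u : Fin d → Fin d → ℝ)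
    (W L : Matrix (Fin d) (Fin d) ℝ)
    (hortho : ∀ i j, dotProduct (u i) (u j) = if i = j then (1 : ℝ) else 0)
    (hl : ∀ i, 0 < l i)
    (hW : W = ∑ i, l i • Matrix.vecMulVec (u i) (u i))
    (hL : L.IsSymm) :
    ((2 : ℝ) ^ d)⁻¹ •
      ∑ s ∈ Fintype.piFinset (fun _ : Fin d => ({-1, 1} : Finset ℝ)),
        (Matrix.trace
            (Matrix.vecMulVec (∑ i, (s i * Real.sqrt (l i)) • u i)
              (∑ i, (s i * Real.sqrt (l i)) • u i) * L)) •
          (W⁻¹ * Matrix.vecMulVec (∑ i, (s i * Real.sqrt (l i)) • u i)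
              (∑ i, (s i * Real.sqrt (l i)) • u i) * W⁻¹ - W⁻¹)
      = (2 : ℝ) • (L - ∑ i,
          (dotProduct (u i) (L.mulVec (u i))) • Matrix.vecMulVec (u i) (u i)) := by
  let V : orthogonalGroup (Fin d) ℝ := ⟨of u, (mem_orthogonalGroup_iff _ _).2 <| by
    ext i j
    simpa [mul_apply, dotProduct, one_apply] using hortho i j⟩
  set c : Fin d → ℝ := fun i => √(l i)
  have hc : ∀ i, c i ≠ 0 := fun i => (Real.sqrt_pos.2 (hl i)).ne'
  have hW' : W = orthogonalConj V (diagonal (c ^ 2)) := by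
    rw [hW, show c ^ 2 = l from funext fun i => Real.sq_sqrt (hl i).le]
    exact sum_smul_vecMulVec_eq_orthogonalConj V l
  have hw : ∀ s : Fin d → ℝ, ∑ i, (s i * √(l i)) • u i = (s * c) ᵥ* (V : Matrix _ _ ℝ) :=
    fun s => (vecMul_eq_sum _ _).symm
  simp only [hw, hW', trace_smul_sub_eq_orthogonalConj V hc]
  rw [← map_sum, ← map_smul, sum_signVectors_trace_smul_sub _ hc, transpose_orthogonalConj_symm,
    hL.eq, Fintype.card_fin, smul_smul, inv_mul_cancel₀ (pow_ne_zero d two_ne_zero), one_smul]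
  erw [sum_dotProduct_mulVec_smul_vecMulVec_eq_orthogonalConj V L]
  rw [← (orthogonalConj V).apply_symm_apply (2 • (L - _))]
  congr 1
  simp only [map_smul, map_sub, StarAlgEquiv.symm_apply_apply]
  module

/-- Off-diagonal sampling: play `w = ∑ i, s i √(λ i) • u i` with i.i.d. uniform
signs `s`, and use the estimate `L̃ = ℓ (W⁻¹ w wᵀ W⁻¹ − W⁻¹)` with
`ℓ = tr(w wᵀ L)`.  Then `E[L̃] = 2 (L − ∑ i (u_iᵀ L u_i) u_i u_iᵀ)`. -/
theorem stmt_6 (d : ℕ) (l : Fin d → ℝ) (u : Fin d → Fin d → ℝ)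
    (W L : Matrix (Fin d) (Fin d) ℝ)
    (hortho : ∀ i j, dotProduct (u i) (u j) = if i = j then (1 : ℝ) else 0)
    (hl : ∀ i, 0 < l i) (hsum : ∑ i, l i = 1)
    (hW : W = ∑ i, l i • Matrix.vecMulVec (u i) (u i))
    (hL : L.IsSymm) :
    ((2 : ℝ) ^ d)⁻¹ •
      ∑ s ∈ Fintype.piFinset (fun _ : Fin d => ({-1, 1} : Finset ℝ)),
        (Matrix.trace
            (Matrix.vecMulVec (∑ i, (s i * Real.sqrt (l i)) • u i)
              (∑ i, (s i * Real.sqrt (l i)) • u i) * L)) •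
          (W⁻¹ * Matrix.vecMulVec (∑ i, (s i * Real.sqrt (l i)) • u i)
              (∑ i, (s i * Real.sqrt (l i)) • u i) * W⁻¹ - W⁻¹)
      = (2 : ℝ) • (L - ∑ i,
          (dotProduct (u i) (L.mulVec (u i))) • Matrix.vecMulVec (u i) (u i)) :=
  stmt_6_general d l u W L hortho hl hW hL
end

section
/- Let U be a symmetric PSD d×d matrix with tr(U) = 1, θ ∈ (0,1), and let Ũ = (1−θ)U + (θ/d)I. Then the Bregman divergence induced by the log-determinant regularizer between Ũ and W₁ = (1/d)I satisfies D_R(Ũ ‖ (1/d)I) ≤ d log(1/θ). -/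
/-!
Since `((1/d) • I)⁻¹ = d • I`, the matrix inside the divergence is `M = d(1-θ) U + θ I`, whose
trace is `d`; so the divergence equals `-log det M`. As `M - θ I = d(1-θ) U` is positive
semidefinite, every eigenvalue of `M` is at least `θ`, hence `det M ≥ θ ^ d`.
-/

open Matrix
open scoped ComplexOrder

namespace Matrix

variable {n 𝕜 : Type*} [Fintype n] [DecidableEq n] [RCLike 𝕜]

lemma IsHermitian.le_eigenvalues_of_posSemidef_sub {A : Matrix n n 𝕜} (hA : A.IsHermitian)
    {c : ℝ} (h : (A - c • (1 : Matrix n n 𝕜)).PosSemidef) (i : n) :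
    c ≤ hA.eigenvalues i := by
  have hnorm : star ⇑(hA.eigenvectorBasis i) ⬝ᵥ ⇑(hA.eigenvectorBasis i) = 1 := by
    rw [dotProduct_comm, ← EuclideanSpace.inner_eq_star_dotProduct, inner_self_eq_norm_sq_to_K,
      hA.eigenvectorBasis.orthonormal.1 i]
    simp
  have hquad := h.re_dotProduct_nonneg (hA.eigenvectorBasis i)
  rw [sub_mulVec, dotProduct_sub, map_sub, ← hA.eigenvalues_eq, smul_mulVec, one_mulVec,
    dotProduct_smul, hnorm] at hquad
  simpa [RCLike.smul_re] using hquad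

lemma pow_card_le_det_of_posSemidef_sub {A : Matrix n n ℝ} {c : ℝ} (hc : 0 ≤ c)
    (h : (A - c • (1 : Matrix n n ℝ)).PosSemidef) : c ^ Fintype.card n ≤ A.det := by
  have hA : A.IsHermitian := by
    simpa using h.isHermitian.add (isHermitian_one.smul (IsSelfAdjoint.all c))
  rw [hA.det_eq_prod_eigenvalues, ← Finset.card_univ, ← Finset.prod_const]
  exact Finset.prod_le_prod (fun _ _ ↦ hc) fun i _ ↦ by
    simpa using hA.le_eigenvalues_of_posSemidef_sub h i

lemma card_mul_log_le_log_det_of_posSemidef_sub {A : Matrix n n ℝ} {c : ℝ} (hc : 0 < c)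
    (h : (A - c • (1 : Matrix n n ℝ)).PosSemidef) :
    Fintype.card n * Real.log c ≤ Real.log A.det := by
  rw [← Real.log_pow]
  exact Real.log_le_log (by positivity) (pow_card_le_det_of_posSemidef_sub hc.le h)

end Matrix

theorem stmt_16_general (d : ℕ) (U : Matrix (Fin d) (Fin d) ℝ)
    (hU : U.PosSemidef) (htr : Matrix.trace U = 1)
    (θ : ℝ) (hθ0 : 0 < θ) (hθ1 : θ < 1) :
    Matrix.trace ((((d : ℝ)⁻¹ • (1 : Matrix (Fin d) (Fin d) ℝ))⁻¹)
          * ((1 - θ) • U + (θ / d) • (1 : Matrix (Fin d) (Fin d) ℝ)))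
      - Real.log (((((d : ℝ)⁻¹ • (1 : Matrix (Fin d) (Fin d) ℝ))⁻¹)
          * ((1 - θ) • U + (θ / d) • (1 : Matrix (Fin d) (Fin d) ℝ))).det)
      - (d : ℝ)
      ≤ (d : ℝ) * Real.log (1 / θ) := by
  have hd : (d : ℝ) ≠ 0 := by
    rintro hd
    obtain rfl : d = 0 := by exact_mod_cast hd
    simp at htr
  set M := ((d : ℝ) * (1 - θ)) • U + θ • (1 : Matrix (Fin d) (Fin d) ℝ)
  have hM : ((d : ℝ)⁻¹ • (1 : Matrix (Fin d) (Fin d) ℝ))⁻¹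
      * ((1 - θ) • U + (θ / d) • (1 : Matrix (Fin d) (Fin d) ℝ)) = M := by
    rw [inv_eq_right_inv (B := (d : ℝ) • 1) (by simp [hd]), smul_mul, one_mul, smul_add,
      smul_smul, smul_smul, mul_div_cancel₀ _ hd]
  have htrM : M.trace = d := by
    simp only [M, trace_add, trace_smul, htr, smul_eq_mul, mul_one, trace_one, Fintype.card_fin]
    ring
  have hMθ : (M - θ • (1 : Matrix (Fin d) (Fin d) ℝ)).PosSemidef := by
    simpa [M] using hU.smul (mul_nonneg (Nat.cast_nonneg d) (sub_nonneg.mpr hθ1.le))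
  have hlog := card_mul_log_le_log_det_of_posSemidef_sub hθ0 hMθ
  rw [Fintype.card_fin] at hlog
  rw [hM, htrM, one_div, Real.log_inv]
  linarith

/-- For `U` SPSD with unit trace, `θ ∈ (0,1)`, and the smoothed comparator
`Ũ = (1−θ)U + (θ/d)I`, the log-determinant Bregman divergence to `W₁ = (1/d)I`
satisfies `D_R(Ũ ‖ (1/d)I) ≤ d log(1/θ)`. -/
theorem stmt_16 (d : ℕ) (hd : 0 < d) (U : Matrix (Fin d) (Fin d) ℝ)
    (hU : U.PosSemidef) (htr : Matrix.trace U = 1)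
    (θ : ℝ) (hθ0 : 0 < θ) (hθ1 : θ < 1) :
    Matrix.trace ((((d : ℝ)⁻¹ • (1 : Matrix (Fin d) (Fin d) ℝ))⁻¹)
          * ((1 - θ) • U + (θ / d) • (1 : Matrix (Fin d) (Fin d) ℝ)))
      - Real.log (((((d : ℝ)⁻¹ • (1 : Matrix (Fin d) (Fin d) ℝ))⁻¹)
          * ((1 - θ) • U + (θ / d) • (1 : Matrix (Fin d) (Fin d) ℝ))).det)
      - (d : ℝ)
      ≤ (d : ℝ) * Real.log (1 / θ) :=
  stmt_16_general d U hU htr θ hθ0 hθ1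
end
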